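/- Suppose k = (q−1)/(2l²) is even. Then for every integer n with 1 ≤ n ≤ 2l²−3, J_{2l²}(1,n) = Σ_{i=0}^{l(l−1)−1} d_{i,n}·ζ^i, where, writing i = al + j with 0 ≤ a ≤ l−2 and 0 ≤ j ≤ l−1, d_{i,n} = B_{2l²}(i,n) + (−1)^{a+1}·B_{2l²}(l(l−1)+j, n) − B_{2l²}(l²+i, n) + (−1)^a·B_{2l²}(2l²−l+j, n). -/
import Mathlib


open Finset
open scoped Classical

/-- The primitive `e`-th root of unity `ζ_e = exp(2πi/e)` in `ℂ`. -/
noncomputable def zetaC (e : ℕ) : ℂ := Complex.exp (2 * Real.pi * Complex.I / (e : ℂ))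

/-- The power `χ_e^i` of the multiplicative character `χ_e` of order `e` on `F`,
defined via a discrete logarithm `ind` to a fixed generator:
`χ_e^i(x) = ζ_e^(i·ind x)` for `x ≠ 0`, extended by `χ_e^i(0) = 0`. -/

noncomputable def chiPow {F : Type*} [Field F] (e : ℕ) (ind : F → ℕ) (i : ℤ) (x : F) : ℂ :=
  if x = 0 then 0 else zetaC e ^ (i * (ind x : ℤ))

/-- The Jacobi sum `J_e(i,j) = Σ_{v ∈ F} χ_e^i(v) χ_e^j(v+1)`. -/
noncomputable def jacobiSumInd {F : Type*} [Field F] [Fintype F]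
    (e : ℕ) (ind : F → ℕ) (i j : ℤ) : ℂ :=
  ∑ v : F, chiPow e ind i v * chiPow e ind j (v + 1)

/-- The cyclotomic number `(a,b)_e`: the number of `v ∈ F` with `v ≠ 0`, `v + 1 ≠ 0`,
`ind v ≡ a (mod e)` and `ind (v+1) ≡ b (mod e)`. -/
noncomputable def cycNum {F : Type*} [Field F] (e : ℕ) (ind : F → ℕ) (a b : ℤ) : ℕ :=
  Nat.card {v : F // v ≠ 0 ∧ v + 1 ≠ 0 ∧
    (e : ℤ) ∣ ((ind v : ℤ) - a) ∧ (e : ℤ) ∣ ((ind (v + 1) : ℤ) - b)}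

/-- The Dickson–Hurwitz sum `B_e(i,j) = Σ_{h=0}^{e-1} (h, i - j·h)_e`. -/
noncomputable def dicksonHurwitz {F : Type*} [Field F] (e : ℕ) (ind : F → ℕ) (i j : ℤ) : ℕ :=
  ∑ h ∈ Finset.range e, cycNum e ind (h : ℤ) (i - j * h)

/-! ### Auxiliary lemmas -/

lemma zetaC_prim (e : ℕ) (he : e ≠ 0) : IsPrimitiveRoot (zetaC e) e :=
  Complex.isPrimitiveRoot_exp e he

lemma zetaC_ne_zero (e : ℕ) : zetaC e ≠ 0 := Complex.exp_ne_zero _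

lemma zetaC_zpow_congr {e : ℕ} (he : e ≠ 0) {m m' : ℤ} (h : (e : ℤ) ∣ m - m') :
    zetaC e ^ m = zetaC e ^ m' := by
  obtain ⟨t, ht⟩ := h
  have hm : m = m' + e * t := by linarith
  have h1 : zetaC e ^ (e : ℤ) = 1 := by
    rw [zpow_natCast, (zetaC_prim e he).pow_eq_one]
  rw [hm, zpow_add₀ (zetaC_ne_zero e), zpow_mul, h1, one_zpow, mul_one]

lemma dvd_sub_trans' {e m x y : ℤ} (hxy : e ∣ x - y) : (e ∣ m - x ↔ e ∣ m - y) := by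
  constructor
  · intro h
    have hxx : m - y = (m - x) + (x - y) := by ring
    rw [hxx]; exact dvd_add h hxy
  · intro h
    have hxx : m - x = (m - y) - (x - y) := by ring
    rw [hxx]; exact dvd_sub h hxy

lemma cycNum_congr {F : Type*} [Field F] {e : ℕ} (ind : F → ℕ) {a a' b b' : ℤ}
    (ha : (e : ℤ) ∣ a - a') (hb : (e : ℤ) ∣ b - b') :
    cycNum (F := F) e ind a b = cycNum e ind a' b' := by
  apply Nat.card_congr
  apply Equiv.subtypeEquivRight
  intro v
  rw [dvd_sub_trans' ha, dvd_sub_trans' hb]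

lemma cycNum_eq_card {F : Type*} [Field F] [Fintype F] {e : ℕ} (ind : F → ℕ) (a b : ℤ) :
    cycNum (F := F) e ind a b = (univ.filter (fun v : F => v ≠ 0 ∧ v + 1 ≠ 0 ∧
      (e : ℤ) ∣ ((ind v : ℤ) - a) ∧ (e : ℤ) ∣ ((ind (v + 1) : ℤ) - b))).card := by
  rw [cycNum, Nat.card_eq_fintype_card, Fintype.card_subtype]

lemma mem_residue_iff {e : ℕ} (he : 0 < e) (m a : ℕ) (ha : a < e) :
    ((e : ℤ) ∣ ((m : ℤ) - (a : ℤ))) ↔ a = m % e := by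
  constructor
  · intro h
    have h1 : (a : ℤ) ≡ (m : ℤ) [ZMOD (e : ℤ)] := Int.modEq_iff_dvd.mpr h
    have h2 : (a : ℤ) % e = (m : ℤ) % e := h1
    have h3 : (a : ℤ) % e = a := Int.emod_eq_of_lt (by positivity) (by exact_mod_cast ha)
    have h4 : (m : ℤ) % e = ((m % e : ℕ) : ℤ) := by push_cast; ring
    exact_mod_cast h3 ▸ h4 ▸ h2
  · rintro rfl
    refine ⟨(m / e : ℕ), ?_⟩
    have h5 := Int.emod_add_mul_ediv (m : ℤ) (e : ℤ)
    push_cast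
    linarith

lemma sum_ite_residue {e : ℕ} (he : 0 < e) (m : ℕ) (c : ℂ) :
    ∑ a ∈ range e, (if (e : ℤ) ∣ ((m : ℤ) - (a : ℤ)) then c else 0) = c := by
  rw [Finset.sum_eq_single (m % e)]
  · exact if_pos ((mem_residue_iff he m (m % e) (Nat.mod_lt m he)).mpr rfl)
  · intro a ha hne
    exact if_neg (fun hd => hne ((mem_residue_iff he m a (mem_range.mp ha)).mp hd))
  · intro h
    exact absurd (mem_range.mpr (Nat.mod_lt m he)) h

lemma count_lemma {F : Type*} [Field F] [Fintype F] {e : ℕ} (he : 0 < e)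
    (ind : F → ℕ) (φ : ℤ → ℤ → ℂ)
    (hφ : ∀ a a' b b' : ℤ, (e : ℤ) ∣ a - a' → (e : ℤ) ∣ b - b' → φ a b = φ a' b') :
    ∑ a ∈ range e, ∑ b ∈ range e, (cycNum (F := F) e ind a b : ℂ) * φ a b
      = ∑ v : F, if v ≠ 0 ∧ v + 1 ≠ 0 then φ (ind v) (ind (v + 1)) else 0 := by
  have step1 : ∀ a ∈ range e, ∀ b ∈ range e,
      (cycNum (F := F) e ind a b : ℂ) * φ a b
        = ∑ v : F, if (v ≠ 0 ∧ v + 1 ≠ 0 ∧ (e : ℤ) ∣ ((ind v : ℤ) - a)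
            ∧ (e : ℤ) ∣ ((ind (v + 1) : ℤ) - b)) then φ (ind v) (ind (v + 1)) else 0 := by
    intro a _ b _
    rw [← Finset.sum_filter, cycNum_eq_card]
    rw [Finset.sum_congr rfl (g := fun _ => φ a b) (fun v hv => by
      have hv' := Finset.mem_filter.mp hv
      exact hφ (ind v) a (ind (v + 1)) b hv'.2.2.2.1 hv'.2.2.2.2)]
    rw [Finset.sum_const, nsmul_eq_mul]
  calc ∑ a ∈ range e, ∑ b ∈ range e, (cycNum (F := F) e ind a b : ℂ) * φ a b
      = ∑ a ∈ range e, ∑ b ∈ range e, ∑ v : F,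
          if (v ≠ 0 ∧ v + 1 ≠ 0 ∧ (e : ℤ) ∣ ((ind v : ℤ) - a)
            ∧ (e : ℤ) ∣ ((ind (v + 1) : ℤ) - b)) then φ (ind v) (ind (v + 1)) else 0 := by
        exact Finset.sum_congr rfl (fun a ha => Finset.sum_congr rfl (fun b hb => step1 a ha b hb))
    _ = ∑ v : F, ∑ a ∈ range e, ∑ b ∈ range e,
          if (v ≠ 0 ∧ v + 1 ≠ 0 ∧ (e : ℤ) ∣ ((ind v : ℤ) - a)
            ∧ (e : ℤ) ∣ ((ind (v + 1) : ℤ) - b)) then φ (ind v) (ind (v + 1)) else 0 := by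
        rw [Finset.sum_congr rfl (fun a _ => Finset.sum_comm)]
        exact Finset.sum_comm
    _ = ∑ v : F, if v ≠ 0 ∧ v + 1 ≠ 0 then φ (ind v) (ind (v + 1)) else 0 := by
        apply Finset.sum_congr rfl
        intro v _
        by_cases hv : v ≠ 0 ∧ v + 1 ≠ 0
        · rw [if_pos hv]
          have hcond : ∀ a b : ℕ, (v ≠ 0 ∧ v + 1 ≠ 0 ∧ (e : ℤ) ∣ ((ind v : ℤ) - a)
              ∧ (e : ℤ) ∣ ((ind (v + 1) : ℤ) - b))
              ↔ ((e : ℤ) ∣ ((ind v : ℤ) - a) ∧ (e : ℤ) ∣ ((ind (v + 1) : ℤ) - b)) := by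
            intro a b; constructor
            · rintro ⟨_, _, h1, h2⟩; exact ⟨h1, h2⟩
            · rintro ⟨h1, h2⟩; exact ⟨hv.1, hv.2, h1, h2⟩
          calc ∑ a ∈ range e, ∑ b ∈ range e,
                (if (v ≠ 0 ∧ v + 1 ≠ 0 ∧ (e : ℤ) ∣ ((ind v : ℤ) - a)
                  ∧ (e : ℤ) ∣ ((ind (v + 1) : ℤ) - b)) then φ (ind v) (ind (v + 1)) else 0)
              = ∑ a ∈ range e, if (e : ℤ) ∣ ((ind v : ℤ) - a) then
                  (∑ b ∈ range e, if (e : ℤ) ∣ ((ind (v + 1) : ℤ) - b)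
                    then φ (ind v) (ind (v + 1)) else 0) else 0 := by
                apply Finset.sum_congr rfl
                intro a _
                rw [Finset.sum_congr rfl (fun b _ => by
                  rw [if_congr (hcond a b) rfl rfl, ite_and])]
                split
                · rfl
                · simp
            _ = φ (ind v) (ind (v + 1)) := by
                rw [Finset.sum_congr rfl (fun a _ => by
                  rw [sum_ite_residue he (ind (v + 1)) (φ (ind v) (ind (v + 1)))])]
                exact sum_ite_residue he (ind v) _
        · rw [if_neg hv]
          apply Finset.sum_eq_zero; intro a _
          apply Finset.sum_eq_zero; intro b _
          exact if_neg (fun h => hv ⟨h.1, h.2.1⟩)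

lemma cycNum_symm {F : Type*} [Field F] {e : ℕ} (ind : F → ℕ)
    (hneg : ∀ x : F, x ≠ 0 → (e : ℤ) ∣ (ind (-x) : ℤ) - (ind x : ℤ)) (a b : ℤ) :
    cycNum (F := F) e ind a b = cycNum e ind b a := by
  have key : ∀ (x y : ℤ) (v : F), v ≠ 0 → v + 1 ≠ 0 →
      (e : ℤ) ∣ ((ind v : ℤ) - x) → (e : ℤ) ∣ ((ind (v + 1) : ℤ) - y) →
      ((-1 - v : F) ≠ 0 ∧ (-1 - v) + 1 ≠ 0 ∧
        (e : ℤ) ∣ ((ind (-1 - v) : ℤ) - y) ∧ (e : ℤ) ∣ ((ind ((-1 - v) + 1) : ℤ) - x)) := by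
    intro x y v hv0 hv1 h1 h2
    refine ⟨?_, ?_, ?_, ?_⟩
    · intro h; exact hv1 (by linear_combination -h)
    · intro h; exact hv0 (by linear_combination -h)
    · rw [show (-1 - v : F) = -(v + 1) from by ring]
      have h3 := hneg (v + 1) hv1
      have h4 : (ind (-(v + 1)) : ℤ) - y
          = ((ind (-(v + 1)) : ℤ) - (ind (v + 1) : ℤ)) + ((ind (v + 1) : ℤ) - y) := by ring
      rw [h4]; exact dvd_add h3 h2
    · rw [show (-1 - v : F) + 1 = -v from by ring]
      have h3 := hneg v hv0
      have h4 : (ind (-v) : ℤ) - x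
          = ((ind (-v) : ℤ) - (ind v : ℤ)) + ((ind v : ℤ) - x) := by ring
      rw [h4]; exact dvd_add h3 h1
  apply Nat.card_congr
  refine ⟨fun v => ⟨-1 - v.1, key a b v.1 v.2.1 v.2.2.1 v.2.2.2.1 v.2.2.2.2⟩,
          fun v => ⟨-1 - v.1, key b a v.1 v.2.1 v.2.2.1 v.2.2.2.1 v.2.2.2.2⟩, ?_, ?_⟩
  · intro v; apply Subtype.ext; show -1 - (-1 - v.1) = v.1; ring
  · intro v; apply Subtype.ext; show -1 - (-1 - v.1) = v.1; ring

lemma reindex_lemma {e : ℕ} (he : 0 < e) (c : ℤ) (D G : ℤ → ℂ)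
    (hD : ∀ x y : ℤ, (e : ℤ) ∣ x - y → D x = D y)
    (hG : ∀ x y : ℤ, (e : ℤ) ∣ x - y → G x = G y) :
    ∑ i ∈ range e, D ((i : ℤ) - c) * G (i : ℤ)
      = ∑ b ∈ range e, D (b : ℤ) * G ((b : ℤ) + c) := by
  have hepos : (0 : ℤ) < e := by exact_mod_cast he
  have hmem : ∀ x : ℤ, (x % e).toNat ∈ range e := by
    intro x
    rw [mem_range, ← Nat.cast_lt (α := ℤ), Int.toNat_of_nonneg (Int.emod_nonneg x hepos.ne')]
    exact Int.emod_lt_of_pos x hepos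
  have hval : ∀ x : ℤ, (((x % e).toNat : ℤ)) = x % e :=
    fun x => Int.toNat_of_nonneg (Int.emod_nonneg x hepos.ne')
  have hdvd : ∀ x : ℤ, (e : ℤ) ∣ (((x % e).toNat : ℤ) - x) := by
    intro x
    rw [hval]
    exact ⟨-(x / e), by rw [Int.emod_def]; ring⟩
  have hmodeq : ∀ x y : ℤ, (e : ℤ) ∣ x - y → x % e = y % e :=
    fun x y h => (Int.modEq_iff_dvd.mpr h).symm
  apply Finset.sum_nbij' (i := fun i : ℕ => ((((i : ℤ) - c) % e).toNat))
    (j := fun b : ℕ => ((((b : ℤ) + c) % e).toNat))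
    (fun a _ => hmem _) (fun a _ => hmem _)
  · intro i hi
    have h2 : (e : ℤ) ∣ ((((((i : ℤ) - c) % e).toNat : ℤ) + c) - (i : ℤ)) := by
      have h3 := hdvd ((i : ℤ) - c)
      have h4 : (((((i : ℤ) - c) % e).toNat : ℤ) + c) - (i : ℤ)
          = ((((i : ℤ) - c) % e).toNat : ℤ) - ((i : ℤ) - c) := by ring
      rw [h4]; exact h3
    have h1 : (((((((i : ℤ) - c) % e).toNat : ℤ) + c)) % e) = (i : ℤ) := by
      rw [hmodeq _ _ h2, Int.emod_eq_of_lt (by positivity) (by exact_mod_cast mem_range.mp hi)]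
    rw [h1, Int.toNat_natCast]
  · intro b hb
    have h2 : (e : ℤ) ∣ ((((((b : ℤ) + c) % e).toNat : ℤ) - c) - (b : ℤ)) := by
      have h3 := hdvd ((b : ℤ) + c)
      have h4 : (((((b : ℤ) + c) % e).toNat : ℤ) - c) - (b : ℤ)
          = ((((b : ℤ) + c) % e).toNat : ℤ) - ((b : ℤ) + c) := by ring
      rw [h4]; exact h3
    have h1 : (((((((b : ℤ) + c) % e).toNat : ℤ) - c)) % e) = (b : ℤ) := by
      rw [hmodeq _ _ h2, Int.emod_eq_of_lt (by positivity) (by exact_mod_cast mem_range.mp hb)]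
    rw [h1, Int.toNat_natCast]
  · intro i _
    have hD' : D ((i : ℤ) - c) = D (((((i : ℤ) - c) % e).toNat : ℤ)) := by
      apply hD
      have h3 := hdvd ((i : ℤ) - c)
      have h4 : (i : ℤ) - c - (((((i : ℤ) - c) % e).toNat : ℤ))
          = -((((((i : ℤ) - c) % e).toNat : ℤ)) - ((i : ℤ) - c)) := by ring
      rw [h4]; exact dvd_neg.mpr h3
    have hG' : G (i : ℤ) = G ((((((i : ℤ) - c) % e).toNat : ℤ)) + c) := by
      apply hG
      have h3 := hdvd ((i : ℤ) - c)
      have h4 : (i : ℤ) - ((((((i : ℤ) - c) % e).toNat : ℤ)) + c)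
          = -((((((i : ℤ) - c) % e).toNat : ℤ)) - ((i : ℤ) - c)) := by ring
      rw [h4]; exact dvd_neg.mpr h3
    rw [hD', hG']

lemma sum_range_mul_split (l : ℕ) (f : ℕ → ℂ) (m : ℕ) :
    ∑ i ∈ range (l * m), f i = ∑ a ∈ range m, ∑ j ∈ range l, f (l * a + j) := by
  induction m with
  | zero => simp
  | succ m ih => rw [Nat.mul_succ, Finset.sum_range_add, ih, Finset.sum_range_succ]

lemma alg_lemma (l : ℕ) (hl3 : 3 ≤ l) (hlodd : Odd l) {ζ : ℂ}
    (hζ : IsPrimitiveRoot ζ (2 * l ^ 2)) (B : ℕ → ℂ) :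
    ∑ i ∈ range (2 * l ^ 2), B i * ζ ^ i
      = ∑ i ∈ range (l * (l - 1)),
          (B i + (-1 : ℂ) ^ (i / l + 1) * B (l * (l - 1) + i % l)
            - B (l ^ 2 + i) + (-1 : ℂ) ^ (i / l) * B (2 * l ^ 2 - l + i % l)) * ζ ^ i := by
  have hl0 : 0 < l := by omega
  have hids : l * (l - 1) + l = l ^ 2 := by
    have h : l - 1 + 1 = l := by omega
    calc l * (l - 1) + l = l * ((l - 1) + 1) := by ring
      _ = l * l := by rw [h]
      _ = l ^ 2 := (sq l).symm
  have hid2 : ∀ j : ℕ, l ^ 2 + (l * (l - 1) + j) = 2 * l ^ 2 - l + j := by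
    have h1 := hids
    have hle : l ≤ l ^ 2 := by nlinarith
    generalize l * (l - 1) = A at h1 ⊢
    generalize l ^ 2 = Q at h1 hle ⊢
    intro j; omega
  have hζ1 : ζ ^ (l ^ 2) = -1 := by
    have h2 : (ζ ^ (l ^ 2)) ^ 2 = 1 := by
      rw [← pow_mul, show l ^ 2 * 2 = 2 * l ^ 2 by ring, hζ.pow_eq_one]
    have h3 : ζ ^ (l ^ 2) ≠ 1 := by
      intro h
      have hd := (hζ.pow_eq_one_iff_dvd (l ^ 2)).mp h
      have := Nat.le_of_dvd (by positivity) hd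
      nlinarith
    have h4 : (ζ ^ (l ^ 2) - 1) * (ζ ^ (l ^ 2) + 1) = 0 := by linear_combination h2
    rcases mul_eq_zero.mp h4 with h | h
    · exact absurd (sub_eq_zero.mp h) h3
    · exact eq_neg_of_add_eq_zero_left h
  have homega_l : (-ζ ^ l) ^ l = 1 := by
    rw [neg_pow, Odd.neg_one_pow hlodd, ← pow_mul, ← sq, hζ1]
    ring
  have hω1 : (-ζ ^ l) ≠ 1 := by
    intro h
    have hz : ζ ^ l = -1 := by linear_combination -h
    have h5 : ζ ^ (l * 2) = 1 := by rw [pow_mul, hz]; ring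
    have hd := (hζ.pow_eq_one_iff_dvd (l * 2)).mp h5
    have := Nat.le_of_dvd (by positivity) hd
    nlinarith
  have hgeom : ∑ a ∈ range l, (-ζ ^ l) ^ a = 0 := by
    have hg := geom_sum_mul (-ζ ^ l) l
    rw [homega_l, sub_self] at hg
    rcases mul_eq_zero.mp hg with h | h
    · exact h
    · exact absurd (by linear_combination h : (-ζ ^ l) = 1) hω1
  have h7 : ∀ a : ℕ, (-ζ ^ l) ^ a = (-1 : ℂ) ^ a * ζ ^ (l * a) := by
    intro a; rw [neg_pow, ← pow_mul]
  have hz : ζ ^ (l * (l - 1)) = -∑ a ∈ range (l - 1), (-1 : ℂ) ^ a * ζ ^ (l * a) := by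
    have h5 : ∑ a ∈ range l, (-ζ ^ l) ^ a
        = (∑ a ∈ range (l - 1), (-ζ ^ l) ^ a) + (-ζ ^ l) ^ (l - 1) := by
      rw [← Finset.sum_range_succ, show l - 1 + 1 = l by omega]
    have h6 : (-ζ ^ l) ^ (l - 1) = ζ ^ (l * (l - 1)) := by
      rw [h7, Even.neg_one_pow (Nat.Odd.sub_odd hlodd odd_one), one_mul]
    rw [h5, h6] at hgeom
    have hrw := Finset.sum_congr rfl (fun a (_ : a ∈ range (l - 1)) => h7 a)
    rw [hrw] at hgeom
    linear_combination hgeom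
  have hdivmod : ∀ a j : ℕ, j < l → ((l * a + j) / l = a ∧ (l * a + j) % l = j) := by
    intro a j hj
    constructor
    · rw [Nat.mul_add_div hl0, Nat.div_eq_of_lt hj, add_zero]
    · rw [Nat.mul_add_mod, Nat.mod_eq_of_lt hj]
  calc ∑ i ∈ range (2 * l ^ 2), B i * ζ ^ i
      = ∑ i ∈ range (l ^ 2), B i * ζ ^ i
        + ∑ i ∈ range (l ^ 2), B (l ^ 2 + i) * ζ ^ (l ^ 2 + i) := by
        rw [show 2 * l ^ 2 = l ^ 2 + l ^ 2 by ring, Finset.sum_range_add]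
    _ = ∑ i ∈ range (l ^ 2), (B i - B (l ^ 2 + i)) * ζ ^ i := by
        rw [← Finset.sum_add_distrib]
        apply Finset.sum_congr rfl
        intro i _
        rw [pow_add, hζ1]; ring
    _ = ∑ i ∈ range (l * (l - 1)), (B i - B (l ^ 2 + i)) * ζ ^ i
        + ∑ j ∈ range l, (B (l * (l - 1) + j) - B (l ^ 2 + (l * (l - 1) + j)))
            * ζ ^ (l * (l - 1) + j) := by
        rw [← hids, Finset.sum_range_add]
    _ = ∑ a ∈ range (l - 1), ∑ j ∈ range l,
          (B (l * a + j) - B (l ^ 2 + (l * a + j))) * ζ ^ (l * a + j)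
        + ∑ a ∈ range (l - 1), ∑ j ∈ range l,
          (-1 : ℂ) ^ (a + 1) * (B (l * (l - 1) + j) - B (2 * l ^ 2 - l + j))
            * ζ ^ (l * a + j) := by
        congr 1
        · exact sum_range_mul_split l _ (l - 1)
        · rw [Finset.sum_comm]
          apply Finset.sum_congr rfl
          intro j _
          rw [hid2 j, pow_add]
          refine Eq.symm ?_
          calc ∑ a ∈ range (l - 1),
                (-1 : ℂ) ^ (a + 1) * (B (l * (l - 1) + j) - B (2 * l ^ 2 - l + j))
                  * ζ ^ (l * a + j)
              = ∑ a ∈ range (l - 1), ((-1 : ℂ) ^ a * ζ ^ (l * a))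
                  * (-((B (l * (l - 1) + j) - B (2 * l ^ 2 - l + j)) * ζ ^ j)) := by
                apply Finset.sum_congr rfl
                intro a _
                rw [pow_add, pow_succ]
                ring
            _ = (∑ a ∈ range (l - 1), (-1 : ℂ) ^ a * ζ ^ (l * a))
                  * (-((B (l * (l - 1) + j) - B (2 * l ^ 2 - l + j)) * ζ ^ j)) := by
                rw [← Finset.sum_mul]
            _ = (B (l * (l - 1) + j) - B (2 * l ^ 2 - l + j)) * (ζ ^ (l * (l - 1)) * ζ ^ j) := by
                rw [show (∑ a ∈ range (l - 1), (-1 : ℂ) ^ a * ζ ^ (l * a)) = -ζ ^ (l * (l - 1))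
                  by rw [hz]; ring]
                ring
    _ = ∑ a ∈ range (l - 1), ∑ j ∈ range l,
          (B (l * a + j) + (-1 : ℂ) ^ ((l * a + j) / l + 1) * B (l * (l - 1) + (l * a + j) % l)
            - B (l ^ 2 + (l * a + j))
            + (-1 : ℂ) ^ ((l * a + j) / l) * B (2 * l ^ 2 - l + (l * a + j) % l))
            * ζ ^ (l * a + j) := by
        rw [← Finset.sum_add_distrib]
        apply Finset.sum_congr rfl
        intro a _
        rw [← Finset.sum_add_distrib]
        apply Finset.sum_congr rfl
        intro j hj
        obtain ⟨hdiv, hmod⟩ := hdivmod a j (mem_range.mp hj)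
        rw [hdiv, hmod, pow_succ]
        ring
    _ = ∑ i ∈ range (l * (l - 1)),
          (B i + (-1 : ℂ) ^ (i / l + 1) * B (l * (l - 1) + i % l)
            - B (l ^ 2 + i) + (-1 : ℂ) ^ (i / l) * B (2 * l ^ 2 - l + i % l)) * ζ ^ i := by
        rw [sum_range_mul_split l _ (l - 1)]

theorem jacobiSum_two_lsq_eq_dicksonHurwitz {F : Type*} [Field F] [Fintype F]
    (p r : ℕ) (hp : p.Prime) (hr : 0 < r) (hcard : Fintype.card F = p ^ r)
    (γ : Fˣ) (hγ : ∀ x : Fˣ, ∃ k : ℕ, γ ^ k = x)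
    (ind : F → ℕ) (hind : ∀ x : F, x ≠ 0 → (γ : F) ^ ind x = x)
    (l : ℕ) (hl : l.Prime) (hl3 : 3 ≤ l)
    (k : ℕ) (hk : Fintype.card F = 2 * l ^ 2 * k + 1) (hkeven : Even k)
    (n : ℤ) (hn1 : 1 ≤ n) (hn2 : n ≤ 2 * (l : ℤ) ^ 2 - 3) :
    jacobiSumInd (2 * l ^ 2) ind 1 n =
      ∑ i ∈ Finset.range (l * (l - 1)),
        ((((dicksonHurwitz (2 * l ^ 2) ind (i : ℤ) n : ℤ) +
            (-1 : ℤ) ^ (i / l + 1) *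
              (dicksonHurwitz (2 * l ^ 2) ind ((l * (l - 1) + i % l : ℕ) : ℤ) n : ℤ) -
            (dicksonHurwitz (2 * l ^ 2) ind ((l ^ 2 + i : ℕ) : ℤ) n : ℤ) +
            (-1 : ℤ) ^ (i / l) *
              (dicksonHurwitz (2 * l ^ 2) ind ((2 * l ^ 2 - l + i % l : ℕ) : ℤ) n : ℤ) : ℤ)) : ℂ) *
          zetaC (2 * l ^ 2) ^ i := by
  have hl0 : 0 < l := by omega
  have he : 0 < 2 * l ^ 2 := by positivity
  have hene : (2 * l ^ 2 : ℕ) ≠ 0 := he.ne'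
  have hodd : Odd l := hl.odd_of_ne_two (by omega)
  have hk0 : k ≠ 0 := by
    intro h
    rw [h, mul_zero, zero_add] at hk
    have h2 : 1 < p ^ r := Nat.one_lt_pow hr.ne' hp.one_lt
    omega
  obtain ⟨k', hk'⟩ := hkeven
  have hk'0 : k' ≠ 0 := by omega
  -- order of γ
  have hordγ : orderOf γ = 2 * l ^ 2 * k := by
    have h1 : orderOf γ = Nat.card Fˣ := orderOf_eq_card_of_forall_mem_zpowers (fun x => by
      obtain ⟨m, hm⟩ := hγ x
      exact Subgroup.mem_zpowers_iff.mpr ⟨(m : ℤ), by rw [zpow_natCast]; exact hm⟩)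
    rw [h1, Nat.card_eq_fintype_card, Fintype.card_units, hk]
    omega
  have hpowS : ∀ m m' : ℕ, (γ : F) ^ m = (γ : F) ^ m'
      → ((2 * l ^ 2 * k : ℕ) : ℤ) ∣ (m' : ℤ) - m := by
    intro m m' hmm
    have hu : γ ^ m = γ ^ m' := Units.ext (by
      rw [Units.val_pow_eq_pow_val, Units.val_pow_eq_pow_val]; exact hmm)
    have hmod : m ≡ m' [MOD orderOf γ] := pow_eq_pow_iff_modEq.mp hu
    rw [hordγ] at hmod
    exact hmod.dvd
  have hpow : ∀ m m' : ℕ, (γ : F) ^ m = (γ : F) ^ m'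
      → (2 * (l : ℤ) ^ 2) ∣ (m : ℤ) - m' := by
    intro m m' hmm
    have h2 := hpowS m m' hmm
    have h3 : (2 * (l : ℤ) ^ 2) ∣ (m' : ℤ) - m :=
      dvd_trans ⟨(k : ℤ), by push_cast; ring⟩ h2
    have h4 : (m : ℤ) - m' = -((m' : ℤ) - m) := by ring
    rw [h4]; exact dvd_neg.mpr h3
  have hne1 : (-1 : F) ≠ 0 := by
    intro h
    have : (1 : F) = 0 := by linear_combination -h
    exact one_ne_zero this
  have hneg1 : (2 * (l : ℤ) ^ 2) ∣ (ind (-1 : F) : ℤ) := by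
    have h1 : (γ : F) ^ (ind (-1 : F) * 2) = (γ : F) ^ (0 : ℕ) := by
      rw [pow_mul, hind _ hne1, pow_zero]; ring
    obtain ⟨t, ht⟩ := hpowS _ _ h1
    have hkc : (k : ℤ) = 2 * k' := by rw [hk']; push_cast; ring
    push_cast at ht
    rw [hkc] at ht
    have hY : (2 * (l : ℤ) ^ 2 * k') ∣ (ind (-1 : F) : ℤ) := ⟨-t, by linarith⟩
    exact dvd_trans (dvd_mul_right _ _) hY
  have hmneg : ∀ x : F, x ≠ 0 → (2 * (l : ℤ) ^ 2) ∣ (ind (-x) : ℤ) - (ind x : ℤ) := by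
    intro x hx
    have hnx : -x ≠ 0 := neg_ne_zero.mpr hx
    have h1 : (γ : F) ^ (ind (-x)) = (γ : F) ^ (ind (-1 : F) + ind x) := by
      rw [hind _ hnx, pow_add, hind _ hne1, hind _ hx]; ring
    have h2 := hpow _ _ h1
    push_cast at h2
    have h3 : (ind (-x) : ℤ) - ind x
        = ((ind (-x) : ℤ) - ((ind (-1 : F) : ℤ) + ind x)) + (ind (-1 : F) : ℤ) := by ring
    rw [h3]
    exact dvd_add h2 hneg1
  have hmneg' : ∀ x : F, x ≠ 0 → ((2 * l ^ 2 : ℕ) : ℤ) ∣ (ind (-x) : ℤ) - (ind x : ℤ) := by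
    intro x hx; have := hmneg x hx; push_cast; exact_mod_cast this
  set ζ := zetaC (2 * l ^ 2) with hζdef
  have hzcongr : ∀ x y : ℤ, ((2 * l ^ 2 : ℕ) : ℤ) ∣ x - y → ζ ^ x = ζ ^ y :=
    fun x y h => zetaC_zpow_congr hene h
  have hφ : ∀ a a' b b' : ℤ, ((2 * l ^ 2 : ℕ) : ℤ) ∣ a - a' → ((2 * l ^ 2 : ℕ) : ℤ) ∣ b - b'
      → ζ ^ (a + n * b) = ζ ^ (a' + n * b') := by
    intro a a' b b' h1 h2
    apply hzcongr
    have h3 : (a + n * b) - (a' + n * b') = (a - a') + n * (b - b') := by ring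
    rw [h3]
    exact dvd_add h1 (Dvd.dvd.mul_left h2 n)
  -- Step 1: Jacobi sum as a double sum over residues
  have main1 : jacobiSumInd (2 * l ^ 2) ind 1 n
      = ∑ a ∈ range (2 * l ^ 2), ∑ b ∈ range (2 * l ^ 2),
          (cycNum (2 * l ^ 2) ind a b : ℂ) * ζ ^ ((a : ℤ) + n * (b : ℤ)) := by
    have hterm : ∀ v : F, chiPow (2 * l ^ 2) ind 1 v * chiPow (2 * l ^ 2) ind n (v + 1)
        = if v ≠ 0 ∧ v + 1 ≠ 0 then ζ ^ ((ind v : ℤ) + n * (ind (v + 1) : ℤ)) else 0 := by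
      intro v
      by_cases hv : v = 0
      · simp [chiPow, hv]
      by_cases hv1 : v + 1 = 0
      · simp [chiPow, hv, hv1]
      · rw [chiPow, chiPow, if_neg hv, if_neg hv1, if_pos ⟨hv, hv1⟩, one_mul,
          ← zpow_add₀ (zetaC_ne_zero _)]
    rw [jacobiSumInd, Finset.sum_congr rfl (fun v _ => hterm v)]
    exact (count_lemma he ind (fun a b => ζ ^ (a + n * b)) hφ).symm
  -- Step 2: symmetry
  have main2 : ∑ a ∈ range (2 * l ^ 2), ∑ b ∈ range (2 * l ^ 2),
        (cycNum (2 * l ^ 2) ind a b : ℂ) * ζ ^ ((a : ℤ) + n * (b : ℤ))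
      = ∑ a ∈ range (2 * l ^ 2), ∑ b ∈ range (2 * l ^ 2),
        (cycNum (F := F) (2 * l ^ 2) ind a b : ℂ) * ζ ^ ((b : ℤ) + n * (a : ℤ)) := by
    calc ∑ a ∈ range (2 * l ^ 2), ∑ b ∈ range (2 * l ^ 2),
          (cycNum (F := F) (2 * l ^ 2) ind a b : ℂ) * ζ ^ ((a : ℤ) + n * (b : ℤ))
        = ∑ a ∈ range (2 * l ^ 2), ∑ b ∈ range (2 * l ^ 2),
          (cycNum (F := F) (2 * l ^ 2) ind b a : ℂ) * ζ ^ ((a : ℤ) + n * (b : ℤ)) := by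
          exact Finset.sum_congr rfl (fun a _ => Finset.sum_congr rfl (fun b _ => by
            rw [cycNum_symm ind hmneg' (a : ℤ) (b : ℤ)]))
      _ = ∑ b ∈ range (2 * l ^ 2), ∑ a ∈ range (2 * l ^ 2),
          (cycNum (F := F) (2 * l ^ 2) ind b a : ℂ) * ζ ^ ((a : ℤ) + n * (b : ℤ)) :=
          Finset.sum_comm
  -- Step 3: Dickson-Hurwitz sums
  have main3 : ∑ i ∈ range (2 * l ^ 2), (dicksonHurwitz (2 * l ^ 2) ind (i : ℤ) n : ℂ)
        * ζ ^ (i : ℤ)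
      = ∑ a ∈ range (2 * l ^ 2), ∑ b ∈ range (2 * l ^ 2),
        (cycNum (F := F) (2 * l ^ 2) ind a b : ℂ) * ζ ^ ((b : ℤ) + n * (a : ℤ)) := by
    calc ∑ i ∈ range (2 * l ^ 2), (dicksonHurwitz (2 * l ^ 2) ind (i : ℤ) n : ℂ) * ζ ^ (i : ℤ)
        = ∑ i ∈ range (2 * l ^ 2), ∑ h ∈ range (2 * l ^ 2),
            (cycNum (F := F) (2 * l ^ 2) ind (h : ℤ) ((i : ℤ) - n * (h : ℤ)) : ℂ)
              * ζ ^ (i : ℤ) := by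
          apply Finset.sum_congr rfl
          intro i _
          rw [dicksonHurwitz, Nat.cast_sum, Finset.sum_mul]
      _ = ∑ h ∈ range (2 * l ^ 2), ∑ i ∈ range (2 * l ^ 2),
            (cycNum (F := F) (2 * l ^ 2) ind (h : ℤ) ((i : ℤ) - n * (h : ℤ)) : ℂ)
              * ζ ^ (i : ℤ) := Finset.sum_comm
      _ = ∑ a ∈ range (2 * l ^ 2), ∑ b ∈ range (2 * l ^ 2),
          (cycNum (F := F) (2 * l ^ 2) ind a b : ℂ) * ζ ^ ((b : ℤ) + n * (a : ℤ)) := by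
          apply Finset.sum_congr rfl
          intro h _
          exact reindex_lemma he (n * (h : ℤ))
            (fun x => (cycNum (F := F) (2 * l ^ 2) ind (h : ℤ) x : ℂ))
            (fun x => ζ ^ x)
            (fun x y hxy => by
              have hc : cycNum (F := F) (2 * l ^ 2) ind (h : ℤ) x
                  = cycNum (F := F) (2 * l ^ 2) ind (h : ℤ) y :=
                cycNum_congr ind (by simp) hxy
              simp only [hc])
            (fun x y hxy => hzcongr x y hxy)
  -- Put everything together
  rw [main1, main2, ← main3]
  have main4 : ∑ i ∈ range (2 * l ^ 2), (dicksonHurwitz (2 * l ^ 2) ind (i : ℤ) n : ℂ)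
        * ζ ^ (i : ℤ)
      = ∑ i ∈ range (2 * l ^ 2), (dicksonHurwitz (2 * l ^ 2) ind (i : ℤ) n : ℂ) * ζ ^ i := by
    apply Finset.sum_congr rfl
    intro i _
    rw [zpow_natCast]
  rw [main4, alg_lemma l hl3 hodd (zetaC_prim _ hene)
    (fun m => (dicksonHurwitz (2 * l ^ 2) ind (m : ℤ) n : ℂ))]
  apply Finset.sum_congr rfl
  intro i _
  push_cast
  ring
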